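/- arXiv:2107.00943 — 6 statements merged into one kernel-verified Lean document; each statement's English description precedes it below -/
import Mathlib

section
/- For t > 0, μ > 0 and real ν > 0, the fractional integral index law holds: (1/Γ(ν)) ∫_t^∞ (x - t)^{ν-1} ρ_μ(x) dx = ρ_{ν+μ}(t). -/
/-!
Write `ρ_μ(x) = ∫₀^∞ K_μ(x, u) du` with `K_μ(x, u) = exp(-x/u - u) u^(μ-1)`. For fixed `u > 0`
the `x`-integral is a shifted Gamma integral:
`∫_t^∞ (x - t)^(ν-1) e^{-x/u} dx = e^{-t/u} u^ν Γ(ν)`, so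
`∫_t^∞ (x - t)^(ν-1) K_μ(x, u) dx = Γ(ν) K_{ν+μ}(t, u)`.
The integrand is nonnegative and its iterated integral is finite, so Fubini lets us integrate
in `x` first, which gives `Γ(ν) ρ_{ν+μ}(t)`.
-/

noncomputable def rho (μ t : ℝ) : ℝ :=
  ∫ x in Set.Ioi (0 : ℝ), Real.exp (-t / x - x) * x ^ (μ - 1)

open MeasureTheory Real Set

noncomputable def rhoKernel (μ t u : ℝ) : ℝ :=
  exp (-t / u - u) * u ^ (μ - 1)

lemma rho_eq_integral_rhoKernel (μ t : ℝ) : rho μ t = ∫ u in Ioi 0, rhoKernel μ t u := rfl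

lemma rhoKernel_nonneg (μ t : ℝ) {u : ℝ} (hu : 0 ≤ u) : 0 ≤ rhoKernel μ t u :=
  mul_nonneg (exp_pos _).le (rpow_nonneg hu _)

lemma integrableOn_rhoKernel {μ t : ℝ} (hμ : 0 < μ) (ht : 0 ≤ t) :
    IntegrableOn (rhoKernel μ t) (Ioi 0) := by
  refine (GammaIntegral_convergent hμ).mono' (by unfold rhoKernel; fun_prop) ?_
  filter_upwards [ae_restrict_mem measurableSet_Ioi] with u (hu : 0 < u)
  rw [norm_of_nonneg (rhoKernel_nonneg μ t hu.le), rhoKernel]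
  gcongr
  have : 0 ≤ t / u := div_nonneg ht hu.le
  rw [neg_div]
  linarith

section Translation

variable {E : Type*} [NormedAddCommGroup E]

lemma integrableOn_Ioi_comp_sub_iff (f : ℝ → E) (t : ℝ) :
    IntegrableOn (fun x => f (x - t)) (Ioi t) ↔ IntegrableOn f (Ioi 0) := by
  rw [← sub_self t, ← image_sub_const_Ioi,
    (measurePreserving_sub_right volume t).integrableOn_image (measurableEmbedding_subRight t)]
  rfl

lemma setIntegral_Ioi_comp_sub [NormedSpace ℝ E] (f : ℝ → E) (t : ℝ) :
    ∫ x in Ioi t, f (x - t) = ∫ s in Ioi 0, f s := by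
  rw [← sub_self t, ← image_sub_const_Ioi,
    (measurePreserving_sub_right volume t).setIntegral_image_emb (measurableEmbedding_subRight t)]

end Translation

lemma sub_rpow_mul_rhoKernel (μ ν t x : ℝ) {u : ℝ} (hu : 0 < u) :
    (x - t) ^ (ν - 1) * rhoKernel μ x u
      = rhoKernel μ t u * ((x - t) ^ (ν - 1) * exp (-(u⁻¹ * (x - t)))) := by
  have hexp : -x / u - u = (-t / u - u) + -(u⁻¹ * (x - t)) := by
    field_simp
    ring
  rw [rhoKernel, rhoKernel, hexp, exp_add]
  ring

lemma integrableOn_sub_rpow_mul_rhoKernel (μ t : ℝ) {ν u : ℝ} (hν : 0 < ν) (hu : 0 < u) :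
    IntegrableOn (fun x => (x - t) ^ (ν - 1) * rhoKernel μ x u) (Ioi t) := by
  have hGamma : IntegrableOn (fun s => s ^ (ν - 1) * exp (-(u⁻¹ * s))) (Ioi 0) := by
    simpa using integrableOn_rpow_mul_exp_neg_mul_rpow (p := 1) (by linarith) one_pos (inv_pos.2 hu)
  simp_rw [sub_rpow_mul_rhoKernel μ ν t _ hu]
  exact ((integrableOn_Ioi_comp_sub_iff _ t).2 hGamma).const_mul _

lemma integral_sub_rpow_mul_rhoKernel (μ t : ℝ) {ν u : ℝ} (hν : 0 < ν) (hu : 0 < u) :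
    ∫ x in Ioi t, (x - t) ^ (ν - 1) * rhoKernel μ x u = Gamma ν * rhoKernel (ν + μ) t u := by
  simp_rw [sub_rpow_mul_rhoKernel μ ν t _ hu]
  rw [integral_const_mul, setIntegral_Ioi_comp_sub (fun s => s ^ (ν - 1) * exp (-(u⁻¹ * s))),
    integral_rpow_mul_exp_neg_mul_Ioi hν (inv_pos.2 hu), one_div, inv_inv, rhoKernel, rhoKernel,
    show ν + μ - 1 = ν + (μ - 1) by ring, rpow_add hu]
  ring

lemma integrable_prod_sub_rpow_mul_rhoKernel {μ ν t : ℝ} (hν : 0 < ν) (hνμ : 0 < ν + μ)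
    (ht : 0 ≤ t) :
    Integrable (Function.uncurry fun x u => (x - t) ^ (ν - 1) * rhoKernel μ x u)
      ((volume.restrict (Ioi t)).prod (volume.restrict (Ioi 0))) := by
  refine (integrable_prod_iff' (by unfold rhoKernel; fun_prop)).2 ⟨?_, ?_⟩
  · filter_upwards [ae_restrict_mem measurableSet_Ioi] with u hu
    exact integrableOn_sub_rpow_mul_rhoKernel μ t hν hu
  · refine ((integrableOn_rhoKernel hνμ ht).const_mul (Gamma ν)).congr ?_
    filter_upwards [ae_restrict_mem measurableSet_Ioi] with u (hu : 0 < u)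
    rw [← integral_sub_rpow_mul_rhoKernel μ t hν hu]
    refine setIntegral_congr_fun measurableSet_Ioi fun x (hx : t < x) => ?_
    exact (norm_of_nonneg (mul_nonneg (rpow_nonneg (sub_nonneg.2 hx.le) _)
      (rhoKernel_nonneg μ x hu.le))).symm

theorem stmt_5 (μ ν t : ℝ) (hμ : 0 < μ) (hν : 0 < ν) (ht : 0 < t) :
    (1 / Real.Gamma ν) * ∫ x in Set.Ioi t, (x - t) ^ (ν - 1) * rho μ x
      = rho (ν + μ) t := by
  have hinner : ∀ x ∈ Ioi t,
      (x - t) ^ (ν - 1) * rho μ x = ∫ u in Ioi 0, (x - t) ^ (ν - 1) * rhoKernel μ x u :=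
    fun x _ => (integral_const_mul _ _).symm
  have houter : ∀ u ∈ Ioi (0 : ℝ),
      ∫ x in Ioi t, (x - t) ^ (ν - 1) * rhoKernel μ x u = Gamma ν * rhoKernel (ν + μ) t u :=
    fun u (hu : 0 < u) => integral_sub_rpow_mul_rhoKernel μ t hν hu
  rw [setIntegral_congr_fun measurableSet_Ioi hinner,
    integral_integral_swap (integrable_prod_sub_rpow_mul_rhoKernel hν (add_pos hν hμ) ht.le),
    setIntegral_congr_fun measurableSet_Ioi houter, integral_const_mul, ← mul_assoc,
    one_div_mul_cancel (Gamma_pos_of_pos hν).ne', one_mul, rho_eq_integral_rhoKernel]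
end

section
/- For all n ∈ ℕ, μ > 0, t ≥ 0: ((-1)^n t^n / n!) ρ_μ(t) = ∫₀^∞ x^{μ+n-1} e^{-x - t/x} L_n^μ(x) dx, where L_n^μ denotes the generalized Laguerre polynomial. -/
/-- The generalized Laguerre polynomial $L_n^μ(x)$. -/
noncomputable def laguerre (n : ℕ) (μ x : ℝ) : ℝ :=
  ∑ k ∈ Finset.range (n + 1),
    (-1) ^ k * (Real.Gamma (μ + n + 1) /
      (Real.Gamma (μ + k + 1) * (Nat.factorial (n - k)))) * x ^ k / (Nat.factorial k)

/-!
By Rodrigues' formula, `n! x^μ e^{-x} L_n^μ(x) = (d/dx)^n (x^{μ+n} e^{-x})`, so the right-hand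
side is `(1/n!) ∫₀^∞ f g⁽ⁿ⁾` with `f = x^{n-1} e^{-t/x}` and `g = x^{μ+n} e^{-x}`. Integrating by
parts `n` times moves all derivatives onto `f`, and `f⁽ⁿ⁾ = t^n x^{-n-1} e^{-t/x}`, which turns the
integral into `(-t)^n/n! ∫₀^∞ x^{μ-1} e^{-x-t/x} = (-t)^n/n! ρ_μ(t)`. The `n` integrations by parts
are done at once: `Σ_{k<n} (-1)^k f⁽ᵏ⁾ g⁽ⁿ⁻¹⁻ᵏ⁾` has derivative `f g⁽ⁿ⁾ - (-1)^n f⁽ⁿ⁾ g`, and it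
vanishes at both ends of `(0, ∞)` because it is a combination of terms `t^j x^q e^{-x-t/x}` with
`q + j > 0`.
-/

open Real Filter MeasureTheory Set Topology Finset Polynomial
open scoped Nat

theorem integral_Ioi_of_hasDerivAt_of_tendsto_nhdsGT {E : Type*} [NormedAddCommGroup E]
    [NormedSpace ℝ E] [CompleteSpace E] {f f' : ℝ → E} {a : ℝ} {m₀ m : E}
    (hderiv : ∀ x ∈ Ioi a, HasDerivAt f (f' x) x) (f'int : IntegrableOn f' (Ioi a))
    (h₀ : Tendsto f (𝓝[>] a) (𝓝 m₀)) (hf : Tendsto f atTop (𝓝 m)) :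
    ∫ x in Ioi a, f' x = m - m₀ := by
  classical
  rw [← Ici_sdiff_left] at h₀
  have hderiv' : ∀ x ∈ Ioi a, HasDerivAt (Function.update f a m₀) (f' x) x := fun x hx ↦
    (hderiv x hx).congr_of_eventuallyEq <| by
      filter_upwards [eventually_ne_nhds (ne_of_gt hx)] with y hy
      exact Function.update_of_ne hy _ _
  have hf' : Tendsto (Function.update f a m₀) atTop (𝓝 m) := hf.congr' <| by
    filter_upwards [eventually_ne_atTop a] with x hx
    exact (Function.update_of_ne hx _ _).symm
  simpa using integral_Ioi_of_hasDerivAt_of_tendsto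
    (continuousWithinAt_update_same.mpr h₀) hderiv' f'int hf'

theorem hasDerivAt_sum_alternating_mul {𝕜 : Type*} [NontriviallyNormedField 𝕜]
    {f g : ℕ → 𝕜 → 𝕜} {x : 𝕜} (hf : ∀ k, HasDerivAt (f k) (f (k + 1) x) x)
    (hg : ∀ k, HasDerivAt (g k) (g (k + 1) x) x) (n : ℕ) :
    HasDerivAt (fun y ↦ ∑ k ∈ range n, (-1) ^ k * (f k y * g (n - 1 - k) y))
      (f 0 x * g n x - (-1) ^ n * (f n x * g 0 x)) x := by
  have hterm : ∀ k ∈ range n, HasDerivAt (fun y ↦ (-1) ^ k * (f k y * g (n - 1 - k) y))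
      ((-1) ^ k * (f k x * g (n - k) x) - (-1) ^ (k + 1) * (f (k + 1) x * g (n - (k + 1)) x))
      x := by
    intro k hk
    have hk : k < n := mem_range.mp hk
    refine (((hf k).mul (hg (n - 1 - k))).const_mul ((-1 : 𝕜) ^ k)).congr_deriv ?_
    rw [show n - 1 - k + 1 = n - k by omega, show n - (k + 1) = n - 1 - k by omega, pow_succ]
    ring
  refine (HasDerivAt.fun_sum hterm).congr_deriv ?_
  rw [sum_range_sub' (fun k ↦ (-1) ^ k * (f k x * g (n - k) x))]
  simp

theorem tendsto_rpow_mul_exp_neg_sub_div_atTop (q : ℝ) {t : ℝ} (ht : 0 ≤ t) :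
    Tendsto (fun x : ℝ ↦ x ^ q * exp (-x - t / x)) atTop (𝓝 0) := by
  refine squeeze_zero' ?_ ?_ (tendsto_rpow_mul_exp_neg_mul_atTop_nhds_zero q 1 one_pos)
  · filter_upwards [eventually_gt_atTop 0] with x hx
    positivity
  · filter_upwards [eventually_gt_atTop 0] with x hx
    gcongr
    linarith [div_nonneg ht hx.le]

theorem tendsto_pow_mul_rpow_mul_exp_neg_sub_div_nhdsGT_zero {q t : ℝ} (ht : 0 ≤ t) (j : ℕ)
    (hqj : 0 < q + j) :
    Tendsto (fun x : ℝ ↦ t ^ j * (x ^ q * exp (-x - t / x))) (𝓝[>] 0) (𝓝 0) := by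
  rcases ht.eq_or_lt with rfl | ht
  · rcases j.eq_zero_or_pos with rfl | hj
    · have hq : 0 < q := by simpa using hqj
      have hcont : ContinuousAt (fun x : ℝ ↦ x ^ q * exp (-x)) 0 :=
        (continuousAt_rpow_const 0 q (Or.inr hq.le)).mul (by fun_prop)
      simpa [hq.ne'] using hcont.continuousWithinAt.tendsto (s := Ioi 0)
    · simp [zero_pow hj.ne']
  · have hinv : Tendsto (fun x : ℝ ↦ x ^ q * exp (-t / x)) (𝓝[>] 0) (𝓝 0) := by
      refine ((tendsto_rpow_mul_exp_neg_mul_atTop_nhds_zero (-q) t ht).comp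
        tendsto_inv_nhdsGT_zero).congr' ?_
      filter_upwards [self_mem_nhdsWithin] with x (hx : 0 < x)
      simp [inv_rpow hx.le, rpow_neg hx.le, div_eq_mul_inv]
    have hexp : Tendsto (fun x : ℝ ↦ exp (-x)) (𝓝[>] 0) (𝓝 1) := by
      simpa using
        (by fun_prop : Continuous fun x : ℝ ↦ exp (-x)).continuousWithinAt.tendsto (x := 0)
    simp_rw [show ∀ x : ℝ, -x - t / x = -t / x + -x from fun x ↦ by ring, exp_add]
    simpa [mul_assoc] using (hinv.mul hexp).const_mul (t ^ j)

theorem integrableOn_rpow_mul_exp_neg_sub_div {q t : ℝ} (hq : -1 < q) (ht : 0 ≤ t) :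
    IntegrableOn (fun x : ℝ ↦ x ^ q * exp (-x - t / x)) (Ioi 0) := by
  refine Integrable.mono' (GammaIntegral_convergent (s := q + 1) (by linarith)) ?_ ?_
  · refine ContinuousOn.aestronglyMeasurable (fun x (hx : 0 < x) ↦ ?_) measurableSet_Ioi
    exact ((continuousAt_rpow_const x q (Or.inl hx.ne')).mul
      (continuous_exp.continuousAt.comp (by fun_prop (disch := exact hx.ne')))).continuousWithinAt
  · filter_upwards [ae_restrict_mem measurableSet_Ioi] with x (hx : 0 < x)
    rw [norm_of_nonneg (by positivity), add_sub_cancel_right, mul_comm (exp _)]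
    gcongr
    linarith [div_nonneg ht hx.le]

theorem Gamma_add_natCast_eq_ascPochhammer_mul {s : ℝ} (hs : 0 < s) (m : ℕ) :
    Gamma (s + m) = (ascPochhammer ℝ m).eval s * Gamma s := by
  induction m with
  | zero => simp
  | succ m ih =>
    rw [Nat.cast_succ, ← add_assoc, Gamma_add_one (by positivity), ih, ascPochhammer_succ_eval]
    ring

noncomputable def powExpInvDerivCoeff (a : ℝ) (k j : ℕ) : ℝ :=
  k.choose j * (descPochhammer ℝ (k - j)).eval (a - j)

-- The `k`-th derivative of `x ↦ x ^ a * exp (-t / x)` on `(0, ∞)`.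
noncomputable def powExpInvDeriv (a t : ℝ) (k : ℕ) (x : ℝ) : ℝ :=
  (∑ j ∈ range (k + 1), powExpInvDerivCoeff a k j * t ^ j * x ^ (a - k - j)) * exp (-t / x)

theorem powExpInvDerivCoeff_succ_zero (a : ℝ) (k : ℕ) :
    powExpInvDerivCoeff a (k + 1) 0 = (a - k) * powExpInvDerivCoeff a k 0 := by
  simp [powExpInvDerivCoeff, descPochhammer_succ_eval, mul_comm]

theorem powExpInvDerivCoeff_of_lt {a : ℝ} {k j : ℕ} (h : k < j) :
    powExpInvDerivCoeff a k j = 0 := by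
  simp [powExpInvDerivCoeff, Nat.choose_eq_zero_of_lt h]

theorem powExpInvDerivCoeff_succ_succ (a : ℝ) (k j : ℕ) :
    powExpInvDerivCoeff a (k + 1) (j + 1) =
      (a - k - (j + 1)) * powExpInvDerivCoeff a k (j + 1) + powExpInvDerivCoeff a k j := by
  rcases lt_trichotomy j k with hjk | rfl | hkj
  · obtain ⟨m, rfl⟩ : ∃ m, k = j + 1 + m := ⟨k - j - 1, by omega⟩
    have hchoose :
        ((j + 1 + m).choose (j + 1) : ℝ) * (j + 1) = (j + 1 + m).choose j * (m + 1) := by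
      exact_mod_cast (Nat.choose_succ_right_eq (j + 1 + m) j).trans (by congr 1; omega)
    have hleft : (descPochhammer ℝ (m + 1)).eval (a - j) =
        (a - j) * (descPochhammer ℝ m).eval (a - (j + 1 : ℕ)) := by
      simp [descPochhammer_succ_left, sub_sub]
    simp only [powExpInvDerivCoeff, show j + 1 + m + 1 - (j + 1) = m + 1 by omega,
      show j + 1 + m - (j + 1) = m by omega, show j + 1 + m - j = m + 1 by omega, hleft,
      descPochhammer_succ_eval, Nat.choose_succ_succ']
    push_cast
    linear_combination (eval (a - (j + 1)) (descPochhammer ℝ m)) * hchoose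
  · simp [powExpInvDerivCoeff]
  · rw [powExpInvDerivCoeff_of_lt (by omega), powExpInvDerivCoeff_of_lt (by omega),
      powExpInvDerivCoeff_of_lt hkj]
    ring

theorem hasDerivAt_exp_neg_div (t : ℝ) {x : ℝ} (hx : x ≠ 0) :
    HasDerivAt (fun y ↦ exp (-t / y)) (exp (-t / x) * (t / x ^ 2)) x := by
  convert ((hasDerivAt_inv hx).const_mul (-t)).exp using 1
  · simp [div_eq_mul_inv]
  · field_simp

theorem sum_powExpInvDerivCoeff_succ (a t : ℝ) (k : ℕ) {x : ℝ} (hx : 0 < x) :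
    ∑ j ∈ range (k + 1 + 1),
        powExpInvDerivCoeff a (k + 1) j * t ^ j * x ^ (a - (k + 1 : ℕ) - j) =
      ∑ j ∈ range (k + 1),
        powExpInvDerivCoeff a k j * t ^ j * ((a - k - j) * x ^ (a - k - j - 1)) +
      (∑ j ∈ range (k + 1), powExpInvDerivCoeff a k j * t ^ j * x ^ (a - k - j)) *
        (t / x ^ 2) := by
  have hderiv : ∑ j ∈ range (k + 1),
        (a - k - (j + 1)) * powExpInvDerivCoeff a k (j + 1) * t ^ (j + 1) *
          x ^ (a - (k + 1 : ℕ) - (j + 1 : ℕ)) +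
      (a - k) * powExpInvDerivCoeff a k 0 * t ^ 0 * x ^ (a - (k + 1 : ℕ) - (0 : ℕ)) =
      ∑ j ∈ range (k + 1),
        powExpInvDerivCoeff a k j * t ^ j * ((a - k - j) * x ^ (a - k - j - 1)) := by
    rw [sum_range_succ, powExpInvDerivCoeff_of_lt (lt_add_one k), sum_range_succ' _ k]
    simp only [mul_zero, zero_mul, add_zero]
    congr 1
    · refine sum_congr rfl fun j _ ↦ ?_
      push_cast
      ring_nf
    · push_cast
      ring_nf
  have hshift : ∑ j ∈ range (k + 1),
        powExpInvDerivCoeff a k j * t ^ (j + 1) * x ^ (a - (k + 1 : ℕ) - (j + 1 : ℕ)) =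
      (∑ j ∈ range (k + 1), powExpInvDerivCoeff a k j * t ^ j * x ^ (a - k - j)) *
        (t / x ^ 2) := by
    rw [sum_mul]
    refine sum_congr rfl fun j _ ↦ ?_
    rw [show a - (k + 1 : ℕ) - (j + 1 : ℕ) = a - k - j - 1 - 1 by push_cast; ring,
      rpow_sub_one hx.ne', rpow_sub_one hx.ne']
    field_simp
    ring
  rw [sum_range_succ', powExpInvDerivCoeff_succ_zero]
  simp only [powExpInvDerivCoeff_succ_succ, add_mul, sum_add_distrib]
  linear_combination hderiv + hshift

theorem hasDerivAt_powExpInvDeriv (a t : ℝ) (k : ℕ) {x : ℝ} (hx : 0 < x) :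
    HasDerivAt (powExpInvDeriv a t k) (powExpInvDeriv a t (k + 1) x) x := by
  have hpoly : HasDerivAt
      (fun y ↦ ∑ j ∈ range (k + 1), powExpInvDerivCoeff a k j * t ^ j * y ^ (a - k - j))
      (∑ j ∈ range (k + 1),
        powExpInvDerivCoeff a k j * t ^ j * ((a - k - j) * x ^ (a - k - j - 1))) x :=
    HasDerivAt.fun_sum fun j _ ↦ (hasDerivAt_rpow_const (Or.inl hx.ne')).const_mul _
  refine (hpoly.mul (hasDerivAt_exp_neg_div t hx.ne')).congr_deriv ?_
  rw [powExpInvDeriv, sum_powExpInvDerivCoeff_succ a t k hx]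
  ring

theorem powExpInvDeriv_zero (a t x : ℝ) : powExpInvDeriv a t 0 x = x ^ a * exp (-t / x) := by
  simp [powExpInvDeriv, powExpInvDerivCoeff]

theorem powExpInvDeriv_self (n : ℕ) (t x : ℝ) :
    powExpInvDeriv (n - 1) t n x = t ^ n * x ^ (-(n : ℝ) - 1) * exp (-t / x) := by
  rw [powExpInvDeriv, sum_eq_single_of_mem n (self_mem_range_succ n)]
  · simp only [powExpInvDerivCoeff, Nat.choose_self, Nat.sub_self, descPochhammer_zero, eval_one]
    ring_nf
  · intro j hj hjn
    have hj : j < n := lt_of_le_of_ne (mem_range_succ_iff.mp hj) hjn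
    have hcast : (n : ℝ) - 1 - j = (n - 1 - j : ℕ) := by
      push_cast [Nat.cast_sub (by omega : j ≤ n - 1), Nat.cast_sub (by omega : 1 ≤ n)]
      ring
    rw [powExpInvDerivCoeff, hcast, descPochhammer_eval_coe_nat_of_lt (by omega)]
    ring

noncomputable def powExpDerivCoeff (b : ℝ) (j i : ℕ) : ℝ :=
  (-1) ^ (j + i) * j.choose i * (descPochhammer ℝ i).eval b

-- The `j`-th derivative of `x ↦ x ^ b * exp (-x)`, by Leibniz's rule.
noncomputable def powExpDeriv (b : ℝ) (j : ℕ) (x : ℝ) : ℝ :=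
  (∑ i ∈ range (j + 1), powExpDerivCoeff b j i * x ^ (b - i)) * exp (-x)

theorem powExpDerivCoeff_succ_zero (b : ℝ) (j : ℕ) :
    powExpDerivCoeff b (j + 1) 0 = -powExpDerivCoeff b j 0 := by
  simp [powExpDerivCoeff, pow_succ]

theorem powExpDerivCoeff_succ_succ (b : ℝ) (j i : ℕ) :
    powExpDerivCoeff b (j + 1) (i + 1) =
      -powExpDerivCoeff b j (i + 1) + (b - i) * powExpDerivCoeff b j i := by
  simp only [powExpDerivCoeff, Nat.choose_succ_succ', descPochhammer_succ_eval, pow_succ,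
    show j + 1 + (i + 1) = j + i + 1 + 1 by omega, show j + (i + 1) = j + i + 1 by omega]
  push_cast
  ring

theorem powExpDerivCoeff_of_lt {b : ℝ} {j i : ℕ} (h : j < i) : powExpDerivCoeff b j i = 0 := by
  simp [powExpDerivCoeff, Nat.choose_eq_zero_of_lt h]

theorem hasDerivAt_powExpDeriv (b : ℝ) (j : ℕ) {x : ℝ} (hx : 0 < x) :
    HasDerivAt (powExpDeriv b j) (powExpDeriv b (j + 1) x) x := by
  have hpoly : HasDerivAt (fun y ↦ ∑ i ∈ range (j + 1), powExpDerivCoeff b j i * y ^ (b - i))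
      (∑ i ∈ range (j + 1), powExpDerivCoeff b j i * ((b - i) * x ^ (b - i - 1))) x :=
    HasDerivAt.fun_sum fun i _ ↦ (hasDerivAt_rpow_const (Or.inl hx.ne')).const_mul _
  refine (hpoly.mul (hasDerivAt_neg x).exp).congr_deriv ?_
  have hderiv : ∑ i ∈ range (j + 1), (b - i) * powExpDerivCoeff b j i * x ^ (b - (i + 1 : ℕ)) =
      ∑ i ∈ range (j + 1), powExpDerivCoeff b j i * ((b - i) * x ^ (b - i - 1)) :=
    sum_congr rfl fun i _ ↦ by push_cast; ring_nf
  have hneg : ∑ i ∈ range (j + 1), -powExpDerivCoeff b j (i + 1) * x ^ (b - (i + 1 : ℕ)) +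
      -powExpDerivCoeff b j 0 * x ^ (b - (0 : ℕ)) =
      -∑ i ∈ range (j + 1), powExpDerivCoeff b j i * x ^ (b - i) := by
    rw [sum_range_succ, powExpDerivCoeff_of_lt (lt_add_one j), sum_range_succ' _ j]
    simp only [neg_mul, sum_neg_distrib, zero_mul, neg_zero, add_zero, neg_add]
  have hsum : ∑ i ∈ range (j + 1 + 1), powExpDerivCoeff b (j + 1) i * x ^ (b - i) =
      ∑ i ∈ range (j + 1), powExpDerivCoeff b j i * ((b - i) * x ^ (b - i - 1)) -
        ∑ i ∈ range (j + 1), powExpDerivCoeff b j i * x ^ (b - i) := by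
    rw [sum_range_succ', powExpDerivCoeff_succ_zero]
    simp only [powExpDerivCoeff_succ_succ, add_mul, sum_add_distrib]
    linear_combination hderiv + hneg
  rw [powExpDeriv, hsum]
  ring

theorem powExpDeriv_zero (b x : ℝ) : powExpDeriv b 0 x = x ^ b * exp (-x) := by
  simp [powExpDeriv, powExpDerivCoeff]

theorem powExpDerivCoeff_self_sub {μ : ℝ} (hμ : -1 < μ) {n k : ℕ} (hk : k ≤ n) :
    powExpDerivCoeff (μ + n) n (n - k) =
      (-1) ^ k * n.choose k * (Gamma (μ + n + 1) / Gamma (μ + k + 1)) := by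
  have hpos : 0 < μ + k + 1 := by linarith [(k.cast_nonneg : (0 : ℝ) ≤ k)]
  have hGamma := Gamma_add_natCast_eq_ascPochhammer_mul hpos (n - k)
  rw [Nat.cast_sub hk, show μ + k + 1 + (n - k) = μ + n + 1 by ring] at hGamma
  rw [powExpDerivCoeff, Nat.choose_symm hk, descPochhammer_eval_eq_ascPochhammer, hGamma,
    Nat.cast_sub hk, show μ + n - (n - k) + 1 = μ + k + 1 by ring,
    mul_div_cancel_right₀ _ (Gamma_pos_of_pos hpos).ne',
    show n + (n - k) = k + 2 * (n - k) by omega, pow_add, pow_mul]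
  norm_num

theorem powExpDeriv_eq_laguerre {μ : ℝ} (hμ : -1 < μ) (n : ℕ) {x : ℝ} (hx : 0 < x) :
    powExpDeriv (μ + n) n x = n ! * (x ^ μ * exp (-x)) * laguerre n μ x := by
  rw [powExpDeriv, laguerre, ← sum_range_reflect, mul_sum, sum_mul]
  refine sum_congr rfl fun k hk ↦ ?_
  have hk : k ≤ n := mem_range_succ_iff.mp hk
  rw [Nat.add_sub_cancel, powExpDerivCoeff_self_sub hμ hk, Nat.cast_sub hk,
    show μ + n - (n - k) = μ + k by ring, rpow_add hx, rpow_natCast,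
    Nat.choose_eq_factorial_div_factorial hk,
    Nat.cast_div (Nat.factorial_mul_factorial_dvd_factorial hk) (by positivity)]
  push_cast
  field_simp

theorem powExpInvDeriv_mul_powExpDeriv (a b t : ℝ) (k j : ℕ) {x : ℝ} (hx : 0 < x) :
    powExpInvDeriv a t k x * powExpDeriv b j x =
      ∑ l ∈ range (k + 1), ∑ i ∈ range (j + 1),
        powExpInvDerivCoeff a k l * powExpDerivCoeff b j i *
          (t ^ l * (x ^ (a - k - l + (b - i)) * exp (-x - t / x))) := by
  rw [powExpInvDeriv, powExpDeriv, mul_mul_mul_comm, sum_mul_sum, sum_mul]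
  refine sum_congr rfl fun l _ ↦ ?_
  rw [sum_mul]
  refine sum_congr rfl fun i _ ↦ ?_
  rw [rpow_add hx, show -x - t / x = -t / x + -x by ring, exp_add]
  ring

theorem tendsto_powExpInvDeriv_mul_powExpDeriv {a b t : ℝ} {k j : ℕ} {l : Filter ℝ}
    (hl : ∀ᶠ x in l, 0 < x)
    (hterm : ∀ p ≤ k, ∀ i ≤ j,
      Tendsto (fun x ↦ t ^ p * (x ^ (a - k - p + (b - i)) * exp (-x - t / x))) l (𝓝 0)) :
    Tendsto (fun x ↦ powExpInvDeriv a t k x * powExpDeriv b j x) l (𝓝 0) := by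
  have hsum := tendsto_finsetSum (range (k + 1)) fun p hp ↦
    tendsto_finsetSum (range (j + 1)) fun i hi ↦
      (hterm p (mem_range_succ_iff.mp hp) i (mem_range_succ_iff.mp hi)).const_mul
        (powExpInvDerivCoeff a k p * powExpDerivCoeff b j i)
  simp only [mul_zero, sum_const_zero] at hsum
  refine hsum.congr' ?_
  filter_upwards [hl] with x hx
  exact (powExpInvDeriv_mul_powExpDeriv a b t k j hx).symm

theorem integrableOn_rpow_mul_exp_neg_sub_div_mul_laguerre {q t : ℝ} (hq : -1 < q) (ht : 0 ≤ t)
    (n : ℕ) (μ : ℝ) :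
    IntegrableOn (fun x ↦ x ^ q * exp (-x - t / x) * laguerre n μ x) (Ioi 0) := by
  have hsum : IntegrableOn (fun x ↦ ∑ k ∈ range (n + 1),
      (-1) ^ k * (Gamma (μ + n + 1) / (Gamma (μ + k + 1) * (n - k)!)) / k ! *
        (x ^ (q + k) * exp (-x - t / x))) (Ioi 0) :=
    integrable_finsetSum _ fun k _ ↦ (integrableOn_rpow_mul_exp_neg_sub_div
      (by linarith [(k.cast_nonneg : (0 : ℝ) ≤ k)]) ht).const_mul _
  refine hsum.congr_fun (fun x (hx : 0 < x) ↦ ?_) measurableSet_Ioi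
  rw [laguerre, mul_sum]
  refine sum_congr rfl fun k _ ↦ ?_
  rw [rpow_add hx, rpow_natCast]
  ring

-- The boundary term of the `n`-fold integration by parts of
-- `∫ x ^ (n - 1) * exp (-t / x) * (d/dx)^n (x ^ (μ + n) * exp (-x))`.
noncomputable def partsBoundary (n : ℕ) (μ t x : ℝ) : ℝ :=
  ∑ k ∈ range n, (-1) ^ k * (powExpInvDeriv (n - 1) t k x * powExpDeriv (μ + n) (n - 1 - k) x)

theorem hasDerivAt_partsBoundary {μ : ℝ} (hμ : -1 < μ) (n : ℕ) (t : ℝ) {x : ℝ} (hx : 0 < x) :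
    HasDerivAt (partsBoundary n μ t)
      (n ! * (x ^ (μ + n - 1) * exp (-x - t / x) * laguerre n μ x) -
        (-1) ^ n * t ^ n * (exp (-t / x - x) * x ^ (μ - 1))) x := by
  refine (hasDerivAt_sum_alternating_mul (fun k ↦ hasDerivAt_powExpInvDeriv _ t k hx)
    (fun j ↦ hasDerivAt_powExpDeriv _ j hx) n).congr_deriv ?_
  rw [powExpInvDeriv_zero, powExpDeriv_eq_laguerre hμ n hx, powExpInvDeriv_self,
    powExpDeriv_zero]
  have h₁ : x ^ ((n : ℝ) - 1) * x ^ μ = x ^ (μ + n - 1) := by rw [← rpow_add hx]; ring_nf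
  have h₂ : x ^ (-(n : ℝ) - 1) * x ^ (μ + n) = x ^ (μ - 1) := by rw [← rpow_add hx]; ring_nf
  have h₃ : exp (-t / x) * exp (-x) = exp (-x - t / x) := by rw [← exp_add]; ring_nf
  have h₄ : exp (-t / x) * exp (-x) = exp (-t / x - x) := by rw [← exp_add]; ring_nf
  rw [← h₁, ← h₂, ← h₃, ← h₄]
  ring

theorem tendsto_partsBoundary {n : ℕ} {μ t : ℝ} {l : Filter ℝ}
    (hterm : ∀ k < n, Tendsto (fun x ↦
      powExpInvDeriv (n - 1) t k x * powExpDeriv (μ + n) (n - 1 - k) x) l (𝓝 0)) :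
    Tendsto (partsBoundary n μ t) l (𝓝 0) := by
  have hsum := tendsto_finsetSum (range n) fun k hk ↦
    (hterm k (mem_range.mp hk)).const_mul ((-1 : ℝ) ^ k)
  simp only [mul_zero, sum_const_zero] at hsum
  exact hsum

theorem tendsto_partsBoundary_atTop (n : ℕ) (μ : ℝ) {t : ℝ} (ht : 0 ≤ t) :
    Tendsto (partsBoundary n μ t) atTop (𝓝 0) :=
  tendsto_partsBoundary fun _ _ ↦ tendsto_powExpInvDeriv_mul_powExpDeriv
    (eventually_gt_atTop 0) fun p _ _ _ ↦ by
      simpa using (tendsto_rpow_mul_exp_neg_sub_div_atTop _ ht).const_mul (t ^ p)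

theorem tendsto_partsBoundary_nhdsGT_zero (n : ℕ) {μ t : ℝ} (hμ : -1 < μ) (ht : 0 ≤ t) :
    Tendsto (partsBoundary n μ t) (𝓝[>] 0) (𝓝 0) := by
  refine tendsto_partsBoundary fun k hk ↦ tendsto_powExpInvDeriv_mul_powExpDeriv
    self_mem_nhdsWithin fun p _ i hi ↦
      tendsto_pow_mul_rpow_mul_exp_neg_sub_div_nhdsGT_zero ht p ?_
  have hki : (k : ℝ) + i + 1 ≤ n := by exact_mod_cast (by omega : k + i + 1 ≤ n)
  linarith [(k.cast_nonneg : (0 : ℝ) ≤ k), (i.cast_nonneg : (0 : ℝ) ≤ i)]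

theorem stmt_6 (n : ℕ) (μ t : ℝ) (hμ : 0 < μ) (ht : 0 ≤ t) :
    ((-1 : ℝ) ^ n * t ^ n / (Nat.factorial n)) * rho μ t
      = ∫ x in Set.Ioi (0 : ℝ),
          x ^ (μ + n - 1) * Real.exp (-x - t / x) * laguerre n μ x := by
  have hμ' : -1 < μ := by linarith
  have hR := integrableOn_rpow_mul_exp_neg_sub_div_mul_laguerre
    (by linarith [(n.cast_nonneg : (0 : ℝ) ≤ n)] : -1 < μ + n - 1) ht n μ
  have hL : IntegrableOn (fun x ↦ exp (-t / x - x) * x ^ (μ - 1)) (Ioi 0) :=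
    (integrableOn_rpow_mul_exp_neg_sub_div (by linarith : -1 < μ - 1) ht).congr_fun
      (fun x _ ↦ by ring_nf) measurableSet_Ioi
  have hparts := integral_Ioi_of_hasDerivAt_of_tendsto_nhdsGT
    (fun x hx ↦ hasDerivAt_partsBoundary hμ' n t hx) ((hR.const_mul _).sub (hL.const_mul _))
    (tendsto_partsBoundary_nhdsGT_zero n hμ' ht) (tendsto_partsBoundary_atTop n μ ht)
  rw [integral_sub (hR.const_mul _) (hL.const_mul _), integral_const_mul, integral_const_mul,
    sub_zero] at hparts
  rw [rho, div_mul_eq_mul_div, div_eq_iff (by positivity)]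
  linear_combination -hparts
end

section
/- Let ν > -1, 0 < λ < 1, t ≥ 0 and define the weight ω_k(t,λ) = ρ_{k+ν+1}(t) λ^k / k!. Then for all k ≥ 2, the Pearson-type equation k(k-1) ω_k − (k-1)(k+ν) λ ω_{k-1} − t λ² ω_{k-2} = 0 holds. -/
open MeasureTheory Set Filter Real Topology

noncomputable def rhoIntegrand (t μ x : ℝ) : ℝ := exp (-t / x - x) * x ^ (μ - 1)

lemma rho_eq_integral_rhoIntegrand (μ t : ℝ) :
    rho μ t = ∫ x in Ioi (0 : ℝ), rhoIntegrand t μ x := rfl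

section Bounds

variable {t x : ℝ}

-- Also at `x = 0`, where `-t / 0 = 0`.
lemma exp_neg_div_sub_le_exp_neg (ht : 0 ≤ t) (hx : 0 ≤ x) : exp (-t / x - x) ≤ exp (-x) := by
  have : 0 ≤ t / x := div_nonneg ht hx
  rw [exp_le_exp, neg_div]
  linarith

lemma rhoIntegrand_nonneg (μ : ℝ) (hx : 0 ≤ x) : 0 ≤ rhoIntegrand t μ x :=
  mul_nonneg (exp_pos _).le (rpow_nonneg hx _)

lemma rhoIntegrand_le_exp_neg_mul_rpow (μ : ℝ) (ht : 0 ≤ t) (hx : 0 ≤ x) :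
    rhoIntegrand t μ x ≤ exp (-x) * x ^ (μ - 1) :=
  mul_le_mul_of_nonneg_right (exp_neg_div_sub_le_exp_neg ht hx) (rpow_nonneg hx _)

lemma rhoIntegrand_le_rpow (μ : ℝ) (ht : 0 ≤ t) (hx : 0 ≤ x) :
    rhoIntegrand t μ x ≤ x ^ (μ - 1) :=
  (rhoIntegrand_le_exp_neg_mul_rpow μ ht hx).trans <|
    mul_le_of_le_one_left (rpow_nonneg hx _) (exp_le_one_iff.2 (by linarith))

end Bounds

lemma continuousOn_rhoIntegrand (t μ : ℝ) : ContinuousOn (rhoIntegrand t μ) (Ioi 0) := by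
  intro x (hx : 0 < x)
  exact ((continuousAt_const.div continuousAt_id hx.ne').sub continuousAt_id).rexp.mul
    (continuousAt_rpow_const x _ (Or.inl hx.ne')) |>.continuousWithinAt

lemma integrableOn_rhoIntegrand {t μ : ℝ} (ht : 0 ≤ t) (hμ : 0 < μ) :
    IntegrableOn (rhoIntegrand t μ) (Ioi 0) := by
  refine (GammaIntegral_convergent hμ).mono'
    ((continuousOn_rhoIntegrand t μ).aestronglyMeasurable measurableSet_Ioi) ?_
  filter_upwards [ae_restrict_mem measurableSet_Ioi] with x (hx : 0 < x)
  rw [norm_of_nonneg (rhoIntegrand_nonneg μ hx.le)]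
  exact rhoIntegrand_le_exp_neg_mul_rpow μ ht hx.le

lemma hasDerivAt_rhoIntegrand_add_one (t μ : ℝ) {x : ℝ} (hx : 0 < x) :
    HasDerivAt (rhoIntegrand t (μ + 1))
      (t * rhoIntegrand t (μ - 1) x - rhoIntegrand t (μ + 1) x + μ * rhoIntegrand t μ x) x := by
  have hexp : HasDerivAt (fun x => exp (-t / x - x)) (exp (-t / x - x) * (t / x ^ 2 - 1)) x := by
    have := (((hasDerivAt_inv hx.ne').const_mul (-t)).sub (hasDerivAt_id x)).exp
    convert this using 1
    · ext y; simp [div_eq_mul_inv]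
    · simp only [Pi.sub_apply, id, div_eq_mul_inv]; ring
  have hsq : x ^ (μ - 1 - 1) = x ^ μ / x ^ 2 := by
    rw [sub_sub, one_add_one_eq_two, rpow_sub hx, rpow_two]
  have hfun : rhoIntegrand t (μ + 1) = (fun x => exp (-t / x - x)) * fun x => x ^ μ := by
    ext y; simp only [rhoIntegrand, add_sub_cancel_right, Pi.mul_apply]
  rw [hfun]
  refine (hexp.mul (hasDerivAt_rpow_const (p := μ) (Or.inl hx.ne'))).congr_deriv ?_
  simp only [rhoIntegrand, hsq, Pi.mul_apply]
  field_simp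

lemma tendsto_rhoIntegrand_atTop {t : ℝ} (ht : 0 ≤ t) (μ : ℝ) :
    Tendsto (rhoIntegrand t μ) atTop (𝓝 0) := by
  refine squeeze_zero' ?_ ?_ (tendsto_rpow_mul_exp_neg_mul_atTop_nhds_zero (μ - 1) 1 one_pos)
  · filter_upwards [eventually_ge_atTop 0] with x hx using rhoIntegrand_nonneg μ hx
  · filter_upwards [eventually_ge_atTop 0] with x hx
    rw [neg_one_mul, mul_comm]
    exact rhoIntegrand_le_exp_neg_mul_rpow μ ht hx

lemma rhoIntegrand_zero {t μ : ℝ} (hμ : 1 < μ) : rhoIntegrand t μ 0 = 0 := by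
  simp [rhoIntegrand, zero_rpow (sub_pos.2 hμ).ne']

lemma continuousWithinAt_rhoIntegrand_zero {t μ : ℝ} (ht : 0 ≤ t) (hμ : 1 < μ) :
    ContinuousWithinAt (rhoIntegrand t μ) (Ici 0) 0 := by
  have hpow : ContinuousWithinAt (fun x : ℝ => x ^ (μ - 1)) (Ici 0) 0 :=
    (continuousAt_rpow_const 0 _ (Or.inr (sub_pos.2 hμ).le)).continuousWithinAt
  rw [ContinuousWithinAt, rhoIntegrand_zero hμ]
  rw [ContinuousWithinAt, zero_rpow (sub_pos.2 hμ).ne'] at hpow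
  refine squeeze_zero' ?_ ?_ hpow
  · filter_upwards [self_mem_nhdsWithin] with x (hx : 0 ≤ x) using rhoIntegrand_nonneg μ hx
  · filter_upwards [self_mem_nhdsWithin] with x (hx : 0 ≤ x) using rhoIntegrand_le_rpow μ ht hx

theorem rho_add_one {μ t : ℝ} (hμ : 1 < μ) (ht : 0 ≤ t) :
    rho (μ + 1) t = μ * rho μ t + t * rho (μ - 1) t := by
  have Ilo := integrableOn_rhoIntegrand ht (sub_pos.2 hμ)
  have Imid := integrableOn_rhoIntegrand ht (zero_lt_one.trans hμ)
  have Ihi := integrableOn_rhoIntegrand ht (by linarith : 0 < μ + 1)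
  have hparts := integral_Ioi_of_hasDerivAt_of_tendsto
    (continuousWithinAt_rhoIntegrand_zero ht (by linarith : 1 < μ + 1))
    (fun x hx => hasDerivAt_rhoIntegrand_add_one t μ hx)
    (((Ilo.const_mul t).sub Ihi).add (Imid.const_mul μ)) (tendsto_rhoIntegrand_atTop ht _)
  rw [integral_add (f := fun x => t * rhoIntegrand t (μ - 1) x - rhoIntegrand t (μ + 1) x)
    ((Ilo.const_mul t).sub Ihi) (Imid.const_mul μ),
    integral_sub (f := fun x => t * rhoIntegrand t (μ - 1) x) (Ilo.const_mul t) Ihi,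
    integral_const_mul, integral_const_mul,
    rhoIntegrand_zero (by linarith : 1 < μ + 1), sub_zero] at hparts
  simp only [rho_eq_integral_rhoIntegrand]
  linarith

theorem stmt_7_general (ν t lam : ℝ) (hν : -1 < ν) (ht : 0 ≤ t)
    (w : ℕ → ℝ) (hw : ∀ k : ℕ, w k = rho (k + ν + 1) t * lam ^ k / (Nat.factorial k)) :
    ∀ k : ℕ, 2 ≤ k →
      (k : ℝ) * ((k : ℝ) - 1) * w k - ((k : ℝ) - 1) * ((k : ℝ) + ν) * lam * w (k - 1)
        - t * lam ^ 2 * w (k - 2) = 0 := by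
  intro k hk
  obtain ⟨m, rfl⟩ : ∃ m, k = m + 2 := ⟨k - 2, by omega⟩
  have hμ : 1 < (m : ℝ) + 1 + ν + 1 := by linarith [(m.cast_nonneg : (0 : ℝ) ≤ m)]
  have hrec := rho_add_one hμ ht
  simp only [Nat.add_sub_cancel, show m + 2 - 1 = m + 1 by omega, hw, Nat.factorial_succ]
  push_cast at hrec ⊢
  rw [show (m : ℝ) + 2 + ν + 1 = (m : ℝ) + 1 + ν + 1 + 1 by ring,
    show (m : ℝ) + ν + 1 = (m : ℝ) + 1 + ν + 1 - 1 by ring, hrec]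
  field_simp
  ring

theorem stmt_7 (ν t lam : ℝ) (hν : -1 < ν) (ht : 0 ≤ t) (hl : 0 < lam) (hl1 : lam < 1)
    (w : ℕ → ℝ) (hw : ∀ k : ℕ, w k = rho (k + ν + 1) t * lam ^ k / (Nat.factorial k)) :
    ∀ k : ℕ, 2 ≤ k →
      (k : ℝ) * ((k : ℝ) - 1) * w k - ((k : ℝ) - 1) * ((k : ℝ) + ν) * lam * w (k - 1)
        - t * lam ^ 2 * w (k - 2) = 0 :=
  stmt_7_general ν t lam hν ht w hw
end

section
/- For ν > -1, t > 0, 0 < λ < 1, and n ∈ ℕ₀, the factorial moment γ_n = Σ_{k=n}^∞ ρ_{k+ν+1}(t) λ^k / (k-n)! converges and equals λ^n ρ_{ν+n+1}(t(1-λ)) / (1-λ)^{ν+n+1}. -/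
open MeasureTheory Set Real Nat

theorem hasSum_integral_of_nonneg {ι α : Type*} [Countable ι] [MeasurableSpace α]
    {μ : Measure α} {F : ι → α → ℝ} {f : α → ℝ}
    (hF_meas : ∀ i, AEStronglyMeasurable (F i) μ) (hF_nonneg : ∀ i, ∀ᵐ a ∂μ, 0 ≤ F i a)
    (hf : Integrable f μ) (h_lim : ∀ᵐ a ∂μ, HasSum (fun i => F i a) (f a)) :
    HasSum (fun i => ∫ a, F i a ∂μ) (∫ a, f a ∂μ) :=
  hasSum_integral_of_dominated_convergence F hF_meas
    (fun i => (hF_nonneg i).mono fun _ ha => (norm_of_nonneg ha).le)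
    (h_lim.mono fun _ ha => ha.summable) (hf.congr (h_lim.mono fun _ ha => ha.tsum_eq.symm)) h_lim

theorem integrableOn_exp_neg_div_sub_mul_mul_rpow {t a μ : ℝ} (ht : 0 ≤ t) (ha : 0 < a)
    (hμ : 0 < μ) : IntegrableOn (fun x => exp (-t / x - a * x) * x ^ (μ - 1)) (Ioi 0) := by
  have hdom : IntegrableOn (fun x : ℝ => x ^ (μ - 1) * exp (-a * x ^ (1 : ℝ))) (Ioi 0) :=
    integrableOn_rpow_mul_exp_neg_mul_rpow (by linarith) one_pos ha
  refine hdom.mono' (Measurable.aestronglyMeasurable (by fun_prop)) ?_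
  filter_upwards [ae_restrict_mem measurableSet_Ioi] with x (hx : 0 < x)
  have hexp : exp (-t / x - a * x) ≤ exp (-a * x) :=
    exp_le_exp.mpr (by have := div_nonneg ht hx.le; rw [neg_div]; linarith)
  rw [norm_of_nonneg (by positivity), rpow_one, mul_comm]
  exact mul_le_mul_of_nonneg_left hexp (by positivity)

theorem integral_exp_neg_div_sub_mul_mul_rpow (u μ : ℝ) {a : ℝ} (ha : 0 < a) :
    ∫ x in Ioi 0, exp (-u / x - a * x) * x ^ (μ - 1) = rho μ (u * a) / a ^ μ := by
  have key := integral_comp_mul_left_Ioi (fun y => exp (-(u * a) / y - y) * y ^ (μ - 1)) 0 ha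
  rw [mul_zero, smul_eq_mul] at key
  have hscale : ∀ x ∈ Ioi (0 : ℝ), exp (-(u * a) / (a * x) - a * x) * (a * x) ^ (μ - 1)
      = a ^ (μ - 1) * (exp (-u / x - a * x) * x ^ (μ - 1)) := fun x (hx : 0 < x) => by
    rw [mul_rpow ha.le hx.le, show -(u * a) / (a * x) = -u / x by field_simp]
    ring
  rw [setIntegral_congr_fun measurableSet_Ioi hscale, integral_const_mul] at key
  have hpow : a ^ μ = a ^ (μ - 1) * a := by rw [← rpow_add_one ha.ne', sub_add_cancel]
  rw [rho, hpow, eq_div_iff (by positivity), ← mul_assoc, mul_comm _ (a ^ (μ - 1)), key]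
  field_simp

theorem hasSum_rpow_mul_pow_div_factorial {x : ℝ} (hx : 0 < x) (s c : ℝ) (n : ℕ) :
    HasSum (fun k : ℕ => x ^ (((k + n : ℕ) : ℝ) + s) * (c ^ (k + n) / k !))
      (c ^ n * x ^ (n + s) * exp (c * x)) := by
  have := (NormedSpace.expSeries_div_hasSum_exp (c * x)).mul_left (c ^ n * x ^ (n + s))
  rw [← exp_eq_exp_ℝ] at this
  refine this.congr_fun fun k => ?_
  rw [Nat.cast_add, add_assoc, rpow_add hx, rpow_natCast]
  ring

theorem stmt_12 (ν t lam : ℝ) (hν : -1 < ν) (ht : 0 < t) (hl : 0 < lam) (hl1 : lam < 1)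
    (n : ℕ) :
    Summable (fun k : ℕ => rho ((k + n : ℕ) + ν + 1) t * lam ^ (k + n) / (Nat.factorial k)) ∧
    (∑' k : ℕ, rho ((k + n : ℕ) + ν + 1) t * lam ^ (k + n) / (Nat.factorial k))
      = lam ^ n * rho (ν + n + 1) (t * (1 - lam)) / (1 - lam) ^ (ν + n + 1) := by
  suffices h : HasSum (fun k : ℕ => rho ((k + n : ℕ) + ν + 1) t * lam ^ (k + n) / k !)
      (lam ^ n * rho (ν + n + 1) (t * (1 - lam)) / (1 - lam) ^ (ν + n + 1)) from
    ⟨h.summable, h.tsum_eq⟩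
  have h1 : 0 < 1 - lam := by linarith
  have hlim : ∀ x ∈ Ioi (0 : ℝ), HasSum
      (fun k : ℕ => exp (-t / x - x) * x ^ (((k + n : ℕ) : ℝ) + ν + 1 - 1) * (lam ^ (k + n) / k !))
      (lam ^ n * (exp (-t / x - (1 - lam) * x) * x ^ (ν + n + 1 - 1))) := fun x (hx : 0 < x) => by
    have hexp : exp (-t / x - (1 - lam) * x) = exp (-t / x - x) * exp (lam * x) := by
      rw [← exp_add]; ring_nf
    rw [hexp, add_sub_cancel_right, add_comm ν, show lam ^ n * (exp (-t / x - x) * exp (lam * x)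
      * x ^ (n + ν)) = exp (-t / x - x) * (lam ^ n * x ^ (n + ν) * exp (lam * x)) by ring]
    exact ((hasSum_rpow_mul_pow_div_factorial hx ν lam n).mul_left (exp (-t / x - x))).congr_fun
      fun k => by rw [add_sub_cancel_right, mul_assoc]
  have h := hasSum_integral_of_nonneg (μ := volume.restrict (Ioi 0))
    (fun k => Measurable.aestronglyMeasurable (by fun_prop))
    (fun k => (ae_restrict_mem measurableSet_Ioi).mono fun x (hx : 0 < x) => by positivity)
    ((integrableOn_exp_neg_div_sub_mul_mul_rpow ht.le h1
      (by linarith [n.cast_nonneg (α := ℝ)])).const_mul _)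
    (ae_restrict_of_forall_mem measurableSet_Ioi hlim)
  rw [integral_const_mul, integral_exp_neg_div_sub_mul_mul_rpow _ _ h1, ← mul_div_assoc] at h
  convert h using 2 with k
  rw [rho, mul_div_assoc, integral_mul_const]
end

section
/- For ν > -1, t > 0, 0 < λ < 1, and n ∈ ℕ₀, the power moment μ_n = Σ_{k=0}^∞ ρ_{k+ν+1}(t) λ^k k^n / k! converges and equals Σ_{j=0}^n S(n,j) λ^j ρ_{ν+j+1}(t(1-λ)) / (1-λ)^{ν+j+1}, where S(n,j) are Stirling numbers of the second kind. -/
/-- Stirling numbers of the second kind. -/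
def stirling2 : ℕ → ℕ → ℕ
  | 0, 0 => 1
  | 0, _ + 1 => 0
  | _ + 1, 0 => 0
  | n + 1, k + 1 => (k + 1) * stirling2 n (k + 1) + stirling2 n k

open Real MeasureTheory Set Filter

lemma stirling2_eq_zero : ∀ {n j : ℕ}, n < j → stirling2 n j = 0
  | 0, _ + 1, _ => rfl
  | n + 1, j + 1, h => by
      have h1 : n < j + 1 := by omega
      have h2 : n < j := by omega
      simp [stirling2, stirling2_eq_zero h1, stirling2_eq_zero h2]

lemma mul_descFactorial (k j : ℕ) :
    k * k.descFactorial j = k.descFactorial (j + 1) + j * k.descFactorial j := by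
  rcases le_or_gt j k with h | h
  · rw [Nat.descFactorial_succ]
    calc k * k.descFactorial j = (k - j + j) * k.descFactorial j := by rw [Nat.sub_add_cancel h]
      _ = _ := by ring
  · rw [Nat.descFactorial_of_lt h, Nat.descFactorial_of_lt (by omega)]
    simp

lemma pow_eq_sum_stirling2 (n k : ℕ) :
    k ^ n = ∑ j ∈ Finset.range (n + 1), stirling2 n j * k.descFactorial j := by
  induction n with
  | zero => simp [stirling2]
  | succ n ih =>
    have hext : k ^ n = ∑ j ∈ Finset.range (n + 2), stirling2 n j * k.descFactorial j := by
      rw [Finset.sum_range_succ, stirling2_eq_zero (by omega), ih]; simp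
    have lhs : k ^ (n + 1)
        = (∑ j ∈ Finset.range (n + 2), stirling2 n j * k.descFactorial (j + 1))
          + ∑ j ∈ Finset.range (n + 2), j * stirling2 n j * k.descFactorial j := by
      calc k ^ (n + 1) = k * k ^ n := by ring
        _ = ∑ j ∈ Finset.range (n + 2), stirling2 n j * (k * k.descFactorial j) := by
            rw [hext, Finset.mul_sum]; exact Finset.sum_congr rfl fun j _ => by ring
        _ = ∑ j ∈ Finset.range (n + 2), (stirling2 n j * k.descFactorial (j + 1)
              + j * stirling2 n j * k.descFactorial j) := by
            refine Finset.sum_congr rfl fun j _ => ?_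
            rw [mul_descFactorial]; ring
        _ = _ := Finset.sum_add_distrib
    have h1 : ∑ j ∈ Finset.range (n + 2), stirling2 n j * k.descFactorial (j + 1)
        = ∑ j ∈ Finset.range (n + 1), stirling2 n j * k.descFactorial (j + 1) := by
      rw [Finset.sum_range_succ, stirling2_eq_zero (by omega)]; simp
    have h2 : ∑ j ∈ Finset.range (n + 2), j * stirling2 n j * k.descFactorial j
        = ∑ j ∈ Finset.range (n + 1), (j + 1) * stirling2 n (j + 1) * k.descFactorial (j + 1) := by
      rw [Finset.sum_range_succ']; simp
    rw [lhs, h1, h2, Finset.sum_range_succ' (fun j => stirling2 (n + 1) j * k.descFactorial j)]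
    have : stirling2 (n + 1) 0 = 0 := rfl
    rw [this]
    simp only [Nat.zero_eq, zero_mul, add_zero, Nat.mul_zero]
    rw [← Finset.sum_add_distrib]
    refine (Finset.sum_congr rfl fun j _ => ?_).symm
    show ((j + 1) * stirling2 n (j + 1) + stirling2 n j) * k.descFactorial (j + 1) = _
    ring

lemma pow_le_factorial_mul_exp (y : ℝ) (hy : 0 ≤ y) (m : ℕ) :
    y ^ m ≤ m.factorial * Real.exp y := by
  have h1 : y ^ m / m.factorial ≤ ∑ i ∈ Finset.range (m + 1), y ^ i / i.factorial :=
    Finset.single_le_sum (f := fun i => y ^ i / (i.factorial : ℝ))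
      (fun i _ => by positivity) (Finset.self_mem_range_succ m)
  have h2 := Real.sum_le_exp_of_nonneg hy (m + 1)
  have hm : (0:ℝ) < m.factorial := by exact_mod_cast m.factorial_pos
  have h := le_trans h1 h2
  rw [div_le_iff₀ hm] at h
  linarith [h]

lemma integrand_integrableOn {t c : ℝ} (ht : 0 < t) (hc : 0 < c) (s : ℝ) :
    IntegrableOn (fun x : ℝ => Real.exp (-t / x - c * x) * x ^ s) (Ioi 0) := by
  set f : ℝ → ℝ := fun x => Real.exp (-t / x - c * x) * x ^ s with hf
  have hcont : ∀ {A : Set ℝ}, (∀ x ∈ A, (0:ℝ) < x) → ContinuousOn f A := by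
    intro A hA
    refine ContinuousOn.mul (Real.continuous_exp.comp_continuousOn ?_) ?_
    · exact ((continuousOn_const.div (continuous_id'.continuousOn)
        fun x hx => (hA x hx).ne').sub (continuousOn_const.mul continuous_id'.continuousOn))
    · exact ContinuousOn.rpow_const continuous_id'.continuousOn
        fun x hx => Or.inl (hA x hx).ne'
  have hIoi1 : IntegrableOn f (Ioi 1) := by
    refine integrable_of_isBigO_exp_neg (half_pos hc)
      (hcont fun x hx => lt_of_lt_of_le one_pos hx) ?_
    rw [Asymptotics.isBigO_iff]
    refine ⟨1, ?_⟩
    have hev : ∀ᶠ x in atTop, x ^ s * Real.exp (-(c / 2) * x) < 1 :=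
      (tendsto_rpow_mul_exp_neg_mul_atTop_nhds_zero s (c / 2) (half_pos hc)).eventually_lt_const
        one_pos
    filter_upwards [hev, eventually_gt_atTop (0:ℝ)] with x h1 hx
    have hxs : (0:ℝ) ≤ x ^ s := Real.rpow_nonneg hx.le s
    have hexp1 : Real.exp (-t / x - c * x) ≤ Real.exp (-(c * x)) := by
      apply Real.exp_le_exp.2
      have : 0 < t / x := div_pos ht hx
      rw [neg_div]; linarith
    have key : f x ≤ Real.exp (-(c / 2) * x) := by
      have h0 : f x ≤ Real.exp (-(c * x)) * x ^ s :=
        mul_le_mul_of_nonneg_right hexp1 hxs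
      have hsplit : Real.exp (-(c * x)) = Real.exp (-(c / 2) * x) * Real.exp (-(c / 2) * x) := by
        rw [← Real.exp_add]; ring_nf
      calc f x ≤ Real.exp (-(c * x)) * x ^ s := h0
        _ = Real.exp (-(c / 2) * x) * (x ^ s * Real.exp (-(c / 2) * x)) := by
            rw [hsplit]; ring
        _ ≤ Real.exp (-(c / 2) * x) * 1 :=
            mul_le_mul_of_nonneg_left h1.le (Real.exp_pos _).le
        _ = Real.exp (-(c / 2) * x) := mul_one _
    have hf0 : 0 ≤ f x := mul_nonneg (Real.exp_pos _).le hxs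
    rw [Real.norm_of_nonneg hf0, Real.norm_of_nonneg (Real.exp_pos _).le, one_mul]
    exact key
  have hIoc : IntegrableOn f (Ioc 0 1) := by
    set m : ℕ := ⌈-s⌉₊ with hm
    refine ⟨(hcont fun x hx => hx.1).aestronglyMeasurable measurableSet_Ioc,
      HasFiniteIntegral.restrict_of_bounded (C := m.factorial / t ^ m) measure_Ioc_lt_top ?_⟩
    filter_upwards [ae_restrict_mem measurableSet_Ioc] with x hx
    obtain ⟨hx0, hx1⟩ := hx
    have hxs : (0:ℝ) ≤ x ^ s := Real.rpow_nonneg hx0.le s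
    have hfx : 0 ≤ f x := mul_nonneg (Real.exp_pos _).le hxs
    rw [Real.norm_of_nonneg hfx]
    have hms : (0:ℝ) ≤ (m:ℝ) + s := by
      have := Nat.le_ceil (-s); rw [← hm] at this; linarith
    have hexp : Real.exp (-t / x - c * x) ≤ Real.exp (-(t / x)) := by
      apply Real.exp_le_exp.2
      have : 0 < c * x := mul_pos hc hx0
      rw [neg_div]; linarith
    have h' : t ^ m ≤ m.factorial * x ^ m * Real.exp (t / x) := by
      have h := pow_le_factorial_mul_exp (t / x) (div_pos ht hx0).le m
      have h2 := mul_le_mul_of_nonneg_right h (pow_nonneg hx0.le m)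
      have hxne : x ≠ 0 := hx0.ne'
      rw [div_pow] at h2
      rw [div_mul_cancel₀ _ (pow_ne_zero m hxne)] at h2
      linarith [h2]
    have hkey : Real.exp (-(t / x)) ≤ m.factorial * x ^ m / t ^ m := by
      rw [le_div_iff₀ (pow_pos ht m)]
      have h2 := mul_le_mul_of_nonneg_left h' (Real.exp_pos (-(t / x))).le
      have h3 : Real.exp (-(t / x)) * Real.exp (t / x) = 1 := by
        rw [← Real.exp_add]; simp
      calc Real.exp (-(t / x)) * t ^ m
          ≤ Real.exp (-(t / x)) * (m.factorial * x ^ m * Real.exp (t / x)) := h2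
        _ = (Real.exp (-(t / x)) * Real.exp (t / x)) * (m.factorial * x ^ m) := by ring
        _ = m.factorial * x ^ m := by rw [h3, one_mul]
    have hxpow : x ^ (m : ℕ) * x ^ s ≤ 1 := by
      have : x ^ (m : ℕ) * x ^ s = x ^ ((m : ℝ) + s) := by
        rw [← Real.rpow_natCast x m, ← Real.rpow_add hx0]
      rw [this]
      exact Real.rpow_le_one hx0.le hx1 hms
    calc f x = Real.exp (-t / x - c * x) * x ^ s := rfl
      _ ≤ Real.exp (-(t / x)) * x ^ s := mul_le_mul_of_nonneg_right hexp hxs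
      _ ≤ (m.factorial * x ^ m / t ^ m) * x ^ s := mul_le_mul_of_nonneg_right hkey hxs
      _ = (m.factorial / t ^ m) * (x ^ m * x ^ s) := by ring
      _ ≤ (m.factorial / t ^ m) * 1 := by
          apply mul_le_mul_of_nonneg_left hxpow
          positivity
      _ = m.factorial / t ^ m := mul_one _
  have hu : Ioc (0:ℝ) 1 ∪ Ioi 1 = Ioi 0 := Ioc_union_Ioi_eq_Ioi zero_le_one
  rw [← hu]
  exact hIoc.union hIoi1

lemma rho_eq (s t : ℝ) : rho (s + 1) t = ∫ x in Ioi (0:ℝ), Real.exp (-t / x - x) * x ^ s := by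
  unfold rho; norm_num

lemma rho_nonneg (μ t : ℝ) : 0 ≤ rho μ t := by
  refine setIntegral_nonneg measurableSet_Ioi fun x hx => ?_
  exact mul_nonneg (Real.exp_pos _).le (Real.rpow_nonneg (le_of_lt hx) _)

lemma cov {t c : ℝ} (ht : 0 < t) (hc : 0 < c) (s : ℝ) :
    ∫ x in Ioi (0:ℝ), Real.exp (-t / x - c * x) * x ^ s
      = rho (s + 1) (t * c) / c ^ (s + 1) := by
  have h := integral_comp_mul_left_Ioi
    (fun y => Real.exp (-(t * c) / y - y) * y ^ s) 0 hc
  rw [mul_zero] at h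
  have hL : (∫ x in Ioi (0:ℝ),
      Real.exp (-(t * c) / (c * x) - c * x) * (c * x) ^ s)
      = c ^ s * ∫ x in Ioi (0:ℝ), Real.exp (-t / x - c * x) * x ^ s := by
    rw [← integral_const_mul]
    refine setIntegral_congr_fun measurableSet_Ioi fun x hx => ?_
    have hx0 : (0:ℝ) < x := hx
    have h1 : -(t * c) / (c * x) = -t / x := by
      field_simp
    rw [h1, Real.mul_rpow hc.le hx0.le]
    ring
  rw [hL] at h
  rw [← rho_eq s (t * c)] at h
  have hcs : (0:ℝ) < c ^ s := Real.rpow_pos_of_pos hc s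
  have hcs1 : c ^ (s + 1) = c ^ s * c := by
    rw [Real.rpow_add_one hc.ne' s]
  rw [smul_eq_mul] at h
  have h2 := congrArg (fun z => c * z) h
  rw [← mul_assoc, ← mul_assoc, mul_inv_cancel₀ hc.ne', one_mul] at h2
  rw [hcs1, eq_div_iff (by positivity : (c ^ s * c) ≠ 0)]
  calc (∫ x in Ioi (0:ℝ), Real.exp (-t / x - c * x) * x ^ s) * (c ^ s * c)
      = c * c ^ s * ∫ x in Ioi (0:ℝ), Real.exp (-t / x - c * x) * x ^ s := by ring
    _ = rho (s + 1) (t * c) := h2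

lemma keyB {t lam : ℝ} (ht : 0 < t) (hl : 0 < lam) (hl1 : lam < 1) (s : ℝ) :
    Summable (fun m : ℕ => rho (m + s + 1) t * lam ^ m / (Nat.factorial m)) ∧
    ∑' m : ℕ, rho (m + s + 1) t * lam ^ m / (Nat.factorial m)
      = rho (s + 1) (t * (1 - lam)) / (1 - lam) ^ (s + 1) := by
  have hc : (0:ℝ) < 1 - lam := by linarith
  set F : ℕ → ℝ → ℝ :=
    fun m x => Real.exp (-t / x - x) * x ^ s * ((lam * x) ^ m / (Nat.factorial m)) with hF
  -- each term equals the integral of F m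
  have hterm : ∀ m : ℕ, rho (m + s + 1) t * lam ^ m / (Nat.factorial m)
      = ∫ x in Ioi (0:ℝ), F m x := by
    intro m
    have : rho ((m : ℝ) + s + 1) t
        = ∫ x in Ioi (0:ℝ), Real.exp (-t / x - x) * x ^ ((m : ℝ) + s) := rho_eq _ t
    rw [this, ← integral_mul_const, ← integral_div]
    refine setIntegral_congr_fun measurableSet_Ioi fun x hx => ?_
    have hx0 : (0:ℝ) < x := hx
    have hxm : x ^ ((m : ℝ) + s) = x ^ (m : ℕ) * x ^ s := by
      rw [Real.rpow_add hx0, Real.rpow_natCast]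
    rw [hF]
    simp only
    rw [hxm, mul_pow]
    ring
  -- integrability of each F m
  have hint : ∀ m : ℕ, IntegrableOn (F m) (Ioi 0) := by
    intro m
    have h1 : IntegrableOn
        (fun x : ℝ => Real.exp (-t / x - 1 * x) * x ^ (s + (m : ℝ)) * (lam ^ m / (Nat.factorial m)))
        (Ioi 0) := (integrand_integrableOn ht one_pos (s + m)).mul_const
      (lam ^ m / (Nat.factorial m) : ℝ)
    refine h1.congr_fun (fun x hx => ?_) measurableSet_Ioi
    have hx0 : (0:ℝ) < x := hx
    have hxm : x ^ (s + (m : ℝ)) = x ^ s * x ^ (m : ℕ) := by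
      rw [Real.rpow_add hx0, Real.rpow_natCast]
    rw [hF]
    simp only
    rw [hxm, mul_pow, one_mul]
    ring
  -- nonnegativity of F m on Ioi 0
  have hFnn : ∀ m : ℕ, ∀ x ∈ Ioi (0:ℝ), 0 ≤ F m x := by
    intro m x hx
    have hx0 : (0:ℝ) < x := hx
    rw [hF]
    have := Real.rpow_nonneg hx0.le s
    positivity
  -- partial sums bounded
  have hbound : ∀ N : ℕ, ∑ m ∈ Finset.range N, (rho (m + s + 1) t * lam ^ m / (Nat.factorial m))
      ≤ ∫ x in Ioi (0:ℝ), Real.exp (-t / x - (1 - lam) * x) * x ^ s := by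
    intro N
    have h1 : ∑ m ∈ Finset.range N, (rho (m + s + 1) t * lam ^ m / (Nat.factorial m))
        = ∫ x in Ioi (0:ℝ), ∑ m ∈ Finset.range N, F m x := by
      rw [integral_finset_sum _ (fun m _ => hint m)]
      exact Finset.sum_congr rfl fun m _ => hterm m
    rw [h1]
    refine setIntegral_mono_on (integrable_finset_sum _ fun m _ => hint m)
      (integrand_integrableOn ht hc s) measurableSet_Ioi fun x hx => ?_
    have hx0 : (0:ℝ) < x := hx
    have hxs : (0:ℝ) ≤ Real.exp (-t / x - x) * x ^ s :=
      mul_nonneg (Real.exp_pos _).le (Real.rpow_nonneg hx0.le s)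
    have hsum : ∑ m ∈ Finset.range N, F m x
        = Real.exp (-t / x - x) * x ^ s * ∑ m ∈ Finset.range N, (lam * x) ^ m / m.factorial := by
      rw [Finset.mul_sum]
    rw [hsum]
    have hle : ∑ m ∈ Finset.range N, (lam * x) ^ m / m.factorial ≤ Real.exp (lam * x) :=
      Real.sum_le_exp_of_nonneg (by positivity) N
    calc Real.exp (-t / x - x) * x ^ s * ∑ m ∈ Finset.range N, (lam * x) ^ m / m.factorial
        ≤ Real.exp (-t / x - x) * x ^ s * Real.exp (lam * x) :=
          mul_le_mul_of_nonneg_left hle hxs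
      _ = Real.exp (-t / x - (1 - lam) * x) * x ^ s := by
          rw [mul_right_comm, ← Real.exp_add]
          ring_nf
  -- summability
  have hnn : ∀ m : ℕ, 0 ≤ rho (m + s + 1) t * lam ^ m / (Nat.factorial m) := by
    intro m
    have := rho_nonneg ((m : ℝ) + s + 1) t
    positivity
  have hsummable : Summable (fun m : ℕ => rho (m + s + 1) t * lam ^ m / (Nat.factorial m)) :=
    summable_of_sum_range_le hnn hbound
  refine ⟨hsummable, ?_⟩
  -- value via interchanging sum and integral
  have hswap : ∑' m : ℕ, (∫ x in Ioi (0:ℝ), F m x)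
      = ∫ x in Ioi (0:ℝ), ∑' m : ℕ, F m x := by
    refine integral_tsum_of_summable_integral_norm (fun m => hint m) ?_
    have heq : ∀ m : ℕ, (∫ x in Ioi (0:ℝ), ‖F m x‖)
        = rho (m + s + 1) t * lam ^ m / (Nat.factorial m) := by
      intro m
      rw [hterm m]
      exact setIntegral_congr_fun measurableSet_Ioi fun x hx =>
        Real.norm_of_nonneg (hFnn m x hx)
    rw [funext heq]
    exact hsummable
  have htsum : (∑' m : ℕ, rho (m + s + 1) t * lam ^ m / (Nat.factorial m))
      = ∫ x in Ioi (0:ℝ), ∑' m : ℕ, F m x := by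
    rw [← hswap]
    exact tsum_congr hterm
  rw [htsum]
  have hptw : ∫ x in Ioi (0:ℝ), ∑' m : ℕ, F m x
      = ∫ x in Ioi (0:ℝ), Real.exp (-t / x - (1 - lam) * x) * x ^ s := by
    refine setIntegral_congr_fun measurableSet_Ioi fun x hx => ?_
    have hx0 : (0:ℝ) < x := hx
    have hexp : Real.exp (lam * x) = ∑' m : ℕ, (lam * x) ^ m / (Nat.factorial m) := by
      rw [Real.exp_eq_exp_ℝ, NormedSpace.exp_eq_tsum_div]
    have : ∑' m : ℕ, F m x
        = Real.exp (-t / x - x) * x ^ s * ∑' m : ℕ, (lam * x) ^ m / (Nat.factorial m) :=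
      tsum_mul_left
    rw [this, ← hexp, mul_right_comm, ← Real.exp_add]
    ring_nf
  rw [hptw, cov ht hc s]

theorem stmt_13 (ν t lam : ℝ) (hν : -1 < ν) (ht : 0 < t) (hl : 0 < lam) (hl1 : lam < 1)
    (n : ℕ) :
    Summable (fun k : ℕ => rho (k + ν + 1) t * lam ^ k * (k : ℝ) ^ n / (Nat.factorial k)) ∧
    (∑' k : ℕ, rho (k + ν + 1) t * lam ^ k * (k : ℝ) ^ n / (Nat.factorial k))
      = ∑ j ∈ Finset.range (n + 1),
          (stirling2 n j : ℝ) * lam ^ j * rho (ν + j + 1) (t * (1 - lam))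
            / (1 - lam) ^ (ν + j + 1) := by
  -- the double-indexed family
  set a : ℕ → ℕ → ℝ := fun j k =>
    (stirling2 n j : ℝ) * (rho (k + ν + 1) t * lam ^ k * (k.descFactorial j : ℝ)
      / (Nat.factorial k)) with ha
  -- pointwise decomposition
  have hpt : ∀ k : ℕ, rho (k + ν + 1) t * lam ^ k * (k : ℝ) ^ n / (Nat.factorial k)
      = ∑ j ∈ Finset.range (n + 1), a j k := by
    intro k
    have hA : ((k : ℝ)) ^ n
        = ∑ j ∈ Finset.range (n + 1), (stirling2 n j : ℝ) * (k.descFactorial j : ℝ) := by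
      exact_mod_cast congrArg (fun z : ℕ => (z : ℝ)) (pow_eq_sum_stirling2 n k)
    rw [hA, Finset.mul_sum, Finset.sum_div]
    exact Finset.sum_congr rfl fun j _ => by rw [ha]; ring
  -- analysis of each column j
  have hcol : ∀ j ∈ Finset.range (n + 1),
      Summable (fun k => a j k) ∧
      (∑' k, a j k) = (stirling2 n j : ℝ) * lam ^ j * rho (ν + j + 1) (t * (1 - lam))
        / (1 - lam) ^ (ν + j + 1) := by
    intro j _
    set b : ℕ → ℝ := fun k =>
      rho (k + ν + 1) t * lam ^ k * (k.descFactorial j : ℝ) / (Nat.factorial k) with hb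
    obtain ⟨hg_sum, hg_tsum⟩ := keyB ht hl hl1 (ν + j)
    have hshift : ∀ m : ℕ, b (m + j)
        = lam ^ j * (rho (m + (ν + j) + 1) t * lam ^ m / (Nat.factorial m)) := by
      intro m
      have harg : ((m + j : ℕ) : ℝ) + ν + 1 = (m : ℝ) + (ν + (j : ℝ)) + 1 := by
        push_cast; ring
      have hd : ((Nat.factorial m : ℕ) : ℝ) * (((m + j).descFactorial j : ℕ) : ℝ)
          = ((Nat.factorial (m + j) : ℕ) : ℝ) := by
        have h0 := Nat.factorial_mul_descFactorial (Nat.le_add_left j m)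
        rw [Nat.add_sub_cancel] at h0
        exact_mod_cast congrArg (fun z : ℕ => (z : ℝ)) h0
      have hfac_pos : (0:ℝ) < (Nat.factorial m : ℝ) := by
        exact_mod_cast (Nat.factorial_pos m)
      have hfac_pos' : (0:ℝ) < (Nat.factorial (m + j) : ℝ) := by
        exact_mod_cast (Nat.factorial_pos (m + j))
      rw [hb]
      simp only
      rw [harg, pow_add]
      have hdd : (((m + j).descFactorial j : ℕ) : ℝ)
          = ((Nat.factorial (m + j) : ℝ)) / ((Nat.factorial m : ℝ)) := by
        rw [eq_div_iff hfac_pos.ne']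
        linarith [hd]
      rw [hdd]
      field_simp
    have hshift_sum : Summable (fun m => b (m + j)) := by
      rw [funext hshift]
      exact hg_sum.mul_left _
    have hb_sum : Summable b := (summable_nat_add_iff j).mp hshift_sum
    have hb0 : ∀ i ∈ Finset.range j, b i = 0 := by
      intro i hi
      rw [hb]
      simp only
      rw [Nat.descFactorial_of_lt (Finset.mem_range.mp hi)]
      simp
    have htsum_b : ∑' k, b k = lam ^ j * (rho (ν + j + 1) (t * (1 - lam))
        / (1 - lam) ^ (ν + j + 1)) := by
      rw [← Summable.sum_add_tsum_nat_add j hb_sum, Finset.sum_eq_zero hb0, zero_add]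
      rw [funext hshift, tsum_mul_left, hg_tsum]
    constructor
    · exact hb_sum.mul_left _
    · have : (fun k => a j k) = fun k => (stirling2 n j : ℝ) * b k := rfl
      rw [this, tsum_mul_left, htsum_b]
      ring
  -- summability of the full series
  have hsum_a : ∀ j ∈ Finset.range (n + 1), Summable (fun k => a j k) :=
    fun j hj => (hcol j hj).1
  have hS : Summable (fun k => ∑ j ∈ Finset.range (n + 1), a j k) := by
    refine summable_sum fun j hj => hsum_a j hj
  have hS' : Summable (fun k : ℕ =>
      rho (k + ν + 1) t * lam ^ k * (k : ℝ) ^ n / (Nat.factorial k)) :=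
    hS.congr fun k => (hpt k).symm
  refine ⟨hS', ?_⟩
  rw [tsum_congr hpt, Summable.tsum_finsetSum hsum_a]
  exact Finset.sum_congr rfl fun j hj => (hcol j hj).2
end

section
/- Let ν > -1, t > 0, 0 < λ < 1, and let P be a polynomial with real coefficients of degree n satisfying Σ_{k=0}^∞ P(k) ρ_{k+ν+1}(t) λ^k k^j / k! = 0 for j = 0,…,n-1. Then for each such j, ∫₀^∞ e^{-t/x - x} x^ν · P(xD)((xD)^j e^{λx}) dx = 0, where P(xD) applies the operator x·d/dx according to the polynomial P. -/
/-- The operator $f \mapsto x f'(x)$. -/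
noncomputable def xD (f : ℝ → ℝ) : ℝ → ℝ := fun x => x * deriv f x

/-- For a polynomial $P(y)=\sum_m a_m y^m$, the operator $P(xD)$. -/
noncomputable def polyXD (P : Polynomial ℝ) (f : ℝ → ℝ) : ℝ → ℝ := fun x =>
  ∑ m ∈ Finset.range (P.natDegree + 1), P.coeff m * (xD^[m] f) x

open MeasureTheory Set Real Polynomial
open scoped Nat

lemma summable_natCast_pow_mul_pow_div_factorial_mul_pow (m : ℕ) (c x : ℝ) :
    Summable fun k : ℕ => (k : ℝ) ^ m * c ^ k / k ! * x ^ k := by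
  refine .of_norm_bounded ((summable_pow_div_factorial (exp 1 * |c * x|)).mul_left (m ! : ℝ))
    fun k => ?_
  -- `k ^ m ≤ m ! * e ^ k` is one term of the exponential series of `k`.
  have hk : (k : ℝ) ^ m ≤ m ! * exp 1 ^ k := by
    have := pow_div_factorial_le_exp (k : ℝ) (Nat.cast_nonneg k) m
    rw [div_le_iff₀ (by positivity), ← exp_one_pow] at this
    linarith
  calc ‖(k : ℝ) ^ m * c ^ k / k ! * x ^ k‖ = (k : ℝ) ^ m * |c * x| ^ k / k ! := by
        rw [norm_eq_abs, abs_mul, abs_div, abs_mul, abs_pow, abs_pow, abs_pow, Nat.abs_cast,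
          Nat.abs_cast, abs_mul, mul_pow]
        ring
    _ ≤ m ! * exp 1 ^ k * |c * x| ^ k / k ! := by gcongr
    _ = m ! * ((exp 1 * |c * x|) ^ k / k !) := by ring

lemma hasDerivAt_tsum_mul_pow {a : ℕ → ℝ} {x : ℝ}
    (ha : ∀ r : ℝ, Summable fun k => k * |a k| * r ^ k) (hx : Summable fun k => a k * x ^ k) :
    HasDerivAt (fun y => ∑' k, a k * y ^ k) (∑' k, a k * (k * x ^ (k - 1))) x := by
  set R := |x| + 1
  have hR : 1 ≤ R := by simp [R]
  refine hasDerivAt_tsum_of_isPreconnected (ha R) Metric.isOpen_ball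
    (convex_ball 0 R).isPreconnected (fun k y _ => (hasDerivAt_pow k y).const_mul (a k))
    (fun k y hy => ?_) (by simp [R]) hx (by simp [R])
  rw [Metric.mem_ball, dist_zero_right] at hy
  calc ‖a k * (k * y ^ (k - 1))‖ = k * |a k| * |y| ^ (k - 1) := by
        rw [norm_eq_abs, abs_mul, abs_mul, abs_pow, Nat.abs_cast]
        ring
    _ ≤ k * |a k| * R ^ k := by
        gcongr
        exact (pow_le_pow_left₀ (abs_nonneg y) hy.le _).trans
          (pow_le_pow_right₀ hR (k.sub_le 1))

lemma xD_tsum_mul_pow {a : ℕ → ℝ} (ha : ∀ r : ℝ, Summable fun k => k * |a k| * r ^ k)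
    (ha' : ∀ x : ℝ, Summable fun k => a k * x ^ k) :
    xD (fun y => ∑' k, a k * y ^ k) = fun x => ∑' k, k * a k * x ^ k := by
  funext x
  rw [xD, (hasDerivAt_tsum_mul_pow ha (ha' x)).deriv, ← tsum_mul_left]
  congr 1
  funext k
  rcases k with _ | k
  · simp
  · simp only [Nat.add_sub_cancel, pow_succ]
    ring

lemma xD_iterate_exp_mul (c : ℝ) (m : ℕ) :
    xD^[m] (fun y => exp (c * y)) = fun x => ∑' k : ℕ, (k : ℝ) ^ m * c ^ k / k ! * x ^ k := by
  induction m with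
  | zero =>
    funext x
    simp [exp_eq_exp_ℝ, NormedSpace.exp_eq_tsum_div, mul_pow, div_mul_eq_mul_div]
  | succ m ih =>
    rw [Function.iterate_succ_apply', ih, xD_tsum_mul_pow]
    · funext x
      congr 1
      funext k
      ring
    · intro r
      refine (summable_natCast_pow_mul_pow_div_factorial_mul_pow (m + 1) |c| r).congr fun k => ?_
      simp only [abs_mul, abs_div, abs_pow, Nat.abs_cast]
      ring
    · exact summable_natCast_pow_mul_pow_div_factorial_mul_pow m c

lemma polyXD_iterate_exp_mul (P : ℝ[X]) (c : ℝ) (j : ℕ) (x : ℝ) :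
    polyXD P (xD^[j] fun y => exp (c * y)) x =
      ∑' k : ℕ, P.eval (k : ℝ) * (k : ℝ) ^ j * c ^ k / k ! * x ^ k := by
  simp only [polyXD, ← Function.iterate_add_apply]
  simp only [xD_iterate_exp_mul, ← tsum_mul_left]
  rw [← Summable.tsum_finsetSum fun m _ =>
    (summable_natCast_pow_mul_pow_div_factorial_mul_pow (m + j) c x).mul_left _]
  congr 1
  funext k
  simp only [eval_eq_sum_range, Finset.sum_mul, Finset.sum_div, pow_add]
  exact Finset.sum_congr rfl fun m _ => by ring

lemma Polynomial.summable_eval_natCast_mul_pow (Q : ℝ[X]) {r : ℝ} (hr : |r| < 1) :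
    Summable fun k : ℕ => Q.eval (k : ℝ) * r ^ k := by
  simp only [eval_eq_sum_range, Finset.sum_mul, mul_assoc]
  have hr' : ‖r‖ < 1 := by rwa [norm_eq_abs]
  exact summable_sum fun m _ =>
    (summable_pow_mul_geometric_of_norm_lt_one (R := ℝ) m hr').mul_left (Q.coeff m)

lemma integrableOn_rho_integrand {μ t : ℝ} (ht : 0 ≤ t) (hμ : 0 < μ) :
    IntegrableOn (fun x => exp (-t / x - x) * x ^ (μ - 1)) (Ioi 0) := by
  have hΓ : IntegrableOn (fun x => exp (-x) * x ^ (μ - 1)) (Ioi 0) := GammaIntegral_convergent hμ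
  refine hΓ.mono' (Measurable.aestronglyMeasurable (by fun_prop)) ?_
  filter_upwards [ae_restrict_mem measurableSet_Ioi] with x (hx : 0 < x)
  rw [norm_mul, norm_of_nonneg (exp_pos _).le, norm_of_nonneg (rpow_nonneg hx.le _)]
  gcongr
  have : 0 ≤ t / x := div_nonneg ht hx.le
  rw [neg_div]
  linarith

lemma exp_mul_rpow_mul_pow_le {t ε x : ℝ} (ht : 0 ≤ t) (hε : 0 < ε) (hx : 0 < x) (ν : ℝ)
    (k : ℕ) :
    exp (-t / x - x) * x ^ ν * x ^ k ≤ k ! / ε ^ k * (x ^ ν * exp (-(1 - ε) * x)) := by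
  have hpow : x ^ k ≤ k ! / ε ^ k * exp (ε * x) := by
    have := pow_div_factorial_le_exp (ε * x) (by positivity) k
    rw [mul_pow, div_le_iff₀ (by positivity)] at this
    rw [div_mul_eq_mul_div, le_div_iff₀ (by positivity)]
    linarith
  have hexp : exp (-t / x - x) * exp (ε * x) ≤ exp (-(1 - ε) * x) := by
    rw [← exp_add, exp_le_exp]
    have : 0 ≤ t / x := div_nonneg ht hx.le
    rw [neg_div]
    linarith
  calc exp (-t / x - x) * x ^ ν * x ^ k
      ≤ exp (-t / x - x) * x ^ ν * (k ! / ε ^ k * exp (ε * x)) := by gcongr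
    _ = k ! / ε ^ k * x ^ ν * (exp (-t / x - x) * exp (ε * x)) := by ring
    _ ≤ k ! / ε ^ k * x ^ ν * exp (-(1 - ε) * x) := by gcongr
    _ = k ! / ε ^ k * (x ^ ν * exp (-(1 - ε) * x)) := by ring

lemma setIntegral_rho_integrand_mul_pow {ν t : ℝ} (c : ℝ) (k : ℕ) :
    ∫ x in Ioi 0, exp (-t / x - x) * x ^ ν * (c * x ^ k) = c * rho (k + ν + 1) t := by
  rw [rho, ← integral_const_mul]
  refine setIntegral_congr_fun measurableSet_Ioi fun x (hx : 0 < x) => ?_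
  rw [add_sub_cancel_right, rpow_add hx, rpow_natCast]
  ring

lemma integral_rho_integrand_mul_tsum {ν t ε : ℝ} (hν : -1 < ν) (ht : 0 ≤ t) (hε : 0 < ε)
    (hε1 : ε < 1) {c : ℕ → ℝ} (hc : Summable fun k => |c k| * (k ! / ε ^ k)) :
    ∫ x in Ioi 0, exp (-t / x - x) * x ^ ν * ∑' k, c k * x ^ k =
      ∑' k, c k * rho (k + ν + 1) t := by
  set F : ℕ → ℝ → ℝ := fun k x => exp (-t / x - x) * x ^ ν * (c k * x ^ k)
  have hF : ∀ k, IntegrableOn (F k) (Ioi 0) := fun k => by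
    have hμ : (0 : ℝ) < k + ν + 1 := by linarith [k.cast_nonneg (α := ℝ)]
    refine IntegrableOn.congr_fun ((integrableOn_rho_integrand ht hμ).const_mul (c k))
      (fun x (hx : 0 < x) => ?_) measurableSet_Ioi
    simp only [F, add_sub_cancel_right, rpow_add hx, rpow_natCast]
    ring
  have hG : IntegrableOn (fun x => x ^ ν * exp (-(1 - ε) * x)) (Ioi 0) := by
    simpa using integrableOn_rpow_mul_exp_neg_mul_rpow hν one_pos (sub_pos.mpr hε1)
  have hF_norm : ∀ k, ∫ x in Ioi 0, ‖F k x‖ ≤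
      |c k| * (k ! / ε ^ k) * ∫ x in Ioi 0, x ^ ν * exp (-(1 - ε) * x) := fun k => by
    rw [← integral_const_mul]
    refine setIntegral_mono_on (hF k).norm (hG.const_mul _) measurableSet_Ioi
      fun x (hx : 0 < x) => ?_
    have : ‖F k x‖ = |c k| * (exp (-t / x - x) * x ^ ν * x ^ k) := by
      simp only [F, norm_mul, norm_pow, norm_eq_abs, abs_of_pos hx, abs_of_pos (exp_pos _),
        abs_of_pos (rpow_pos_of_pos hx ν)]
      ring
    rw [this, mul_assoc |c k|]
    exact mul_le_mul_of_nonneg_left (exp_mul_rpow_mul_pow_le ht hε hx ν k) (abs_nonneg _)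
  have hsum : Summable fun k => ∫ x in Ioi 0, ‖F k x‖ :=
    .of_nonneg_of_le (fun k => integral_nonneg fun x => norm_nonneg _)
      hF_norm (hc.mul_right _)
  calc ∫ x in Ioi 0, exp (-t / x - x) * x ^ ν * ∑' k, c k * x ^ k
      = ∫ x in Ioi 0, ∑' k, F k x := by simp only [F, tsum_mul_left]
    _ = ∑' k, ∫ x in Ioi 0, F k x := (integral_tsum_of_summable_integral_norm hF hsum).symm
    _ = ∑' k, c k * rho (k + ν + 1) t := by simp only [F, setIntegral_rho_integrand_mul_pow]

theorem stmt_16_general (ν t lam : ℝ) (hν : -1 < ν) (ht : 0 < t) (hl : 0 < lam) (hl1 : lam < 1)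
    (n : ℕ) (P : Polynomial ℝ)
    (horth : ∀ j < n,
      ∑' k : ℕ, P.eval (k : ℝ) * rho (k + ν + 1) t * lam ^ k * (k : ℝ) ^ j
        / (Nat.factorial k) = 0) :
    ∀ j < n,
      ∫ x in Set.Ioi (0 : ℝ),
        Real.exp (-t / x - x) * x ^ ν
          * polyXD P (xD^[j] fun y : ℝ => Real.exp (lam * y)) x = 0 := by
  intro j hj
  obtain ⟨ε, hlε, hε1⟩ := exists_between hl1
  have hε : 0 < ε := hl.trans hlε
  have hc : Summable fun k : ℕ =>
      |P.eval (k : ℝ) * (k : ℝ) ^ j * lam ^ k / k !| * (k ! / ε ^ k) := by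
    refine ((P * X ^ j).summable_eval_natCast_mul_pow (r := lam / ε) ?_).abs.congr fun k => ?_
    · rw [abs_of_pos (div_pos hl hε)]
      exact (div_lt_one hε).mpr hlε
    · rw [eval_mul, eval_pow, eval_X, abs_mul, abs_div, abs_mul _ (lam ^ k),
        abs_of_pos (pow_pos hl k), abs_of_pos (pow_pos (div_pos hl hε) k), Nat.abs_cast, div_pow]
      field_simp
  simp only [polyXD_iterate_exp_mul]
  rw [integral_rho_integrand_mul_tsum hν ht.le hε hε1 hc, ← horth j hj]
  congr 1
  funext k
  ring

theorem stmt_16 (ν t lam : ℝ) (hν : -1 < ν) (ht : 0 < t) (hl : 0 < lam) (hl1 : lam < 1)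
    (n : ℕ) (P : Polynomial ℝ) (hdeg : P.natDegree = n)
    (horth : ∀ j < n,
      ∑' k : ℕ, P.eval (k : ℝ) * rho (k + ν + 1) t * lam ^ k * (k : ℝ) ^ j
        / (Nat.factorial k) = 0) :
    ∀ j < n,
      ∫ x in Set.Ioi (0 : ℝ),
        Real.exp (-t / x - x) * x ^ ν
          * polyXD P (xD^[j] fun y : ℝ => Real.exp (lam * y)) x = 0 :=
  stmt_16_general ν t lam hν ht hl hl1 n P horth
end
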